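/- Let N ≥ 3 and let H be a homogeneous harmonic polynomial on ℝ^N of degree d ≥ 1 such that ∂H/∂x_N ≥ 0 everywhere on ℝ^N. Then either (i) H is a linear function of x (so d = 1), or (ii) d ≥ 2 and H is a homogeneous harmonic polynomial of degree d depending only on the first N−1 variables x₁, …, x_{N−1}. -/

import Mathlib

/-!
Write `H = p` for a polynomial `p`; then `q = ∂p/∂x_N` is a nonnegative harmonic polynomial,
homogeneous of degree `d - 1`, so `∑ xᵢ ∂ᵢq = (d - 1) q` (Euler). Integrating against the Gaussian
weight `γ(x) = exp(-|x|²/2)`, for which integration by parts turns `∂ᵢ` into multiplication by `xᵢ`,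
gives `(d - 1) ∫ q γ = ∑ᵢ ∫ xᵢ ∂ᵢq γ = ∫ Δq γ = 0`. For `d ≥ 2` the nonnegative continuous
function `q γ` has integral zero, so `q = 0` and `H` does not depend on `x_N`. For `d = 1`, a
`1`-homogeneous differentiable function coincides with its derivative at `0`, hence is linear.
-/

open MvPolynomial MeasureTheory

noncomputable def lapl {N : ℕ} (f : EuclideanSpace ℝ (Fin N) → ℝ)
    (x : EuclideanSpace ℝ (Fin N)) : ℝ :=
  ∑ i, fderiv ℝ (fun y => fderiv ℝ f y (EuclideanSpace.single i 1)) x (EuclideanSpace.single i 1)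

section Calculus

variable {E F : Type*} [NormedAddCommGroup E] [NormedSpace ℝ E] [NormedAddCommGroup F]
  [NormedSpace ℝ F]

theorem apply_eq_fderiv_zero_apply {f : E → F} (hf : DifferentiableAt ℝ f 0)
    (hhom : ∀ (t : ℝ) x, f (t • x) = t • f x) (x : E) : f x = fderiv ℝ f 0 x := by
  have hchain : HasDerivAt (fun t : ℝ => f (t • x)) (fderiv ℝ f 0 x) 0 := by
    have hf' : HasFDerivAt f (fderiv ℝ f 0) ((0 : ℝ) • x) := by
      rw [zero_smul]; exact hf.hasFDerivAt
    exact hf'.comp_hasDerivAt (0 : ℝ) (by simpa using (hasDerivAt_id (0 : ℝ)).smul_const x)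
  have hlin : HasDerivAt (fun t : ℝ => f (t • x)) (f x) 0 := by
    simp only [hhom]
    simpa using (hasDerivAt_id (0 : ℝ)).smul_const (f x)
  exact hlin.unique hchain

theorem apply_add_smul_eq_of_fderiv_apply_eq_zero {f : E → F} (hf : Differentiable ℝ f) {v : E}
    (h : ∀ x, fderiv ℝ f x v = 0) (x : E) (t : ℝ) : f (x + t • v) = f x := by
  have hderiv (s : ℝ) : HasDerivAt (fun s : ℝ => f (x + s • v)) 0 s := by
    have := (hf (x + s • v)).hasFDerivAt.comp_hasDerivAt s
      (((hasDerivAt_id s).smul_const v).const_add x)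
    rwa [one_smul, h] at this
  simpa using is_const_of_deriv_eq_zero (fun s => (hderiv s).differentiableAt)
    (fun s => (hderiv s).deriv) t 0

end Calculus

namespace MvPolynomial

section Algebra

variable {R σ : Type*} [CommRing R]

theorem pderiv_comm (i j : σ) (r : MvPolynomial σ R) :
    pderiv i (pderiv j r) = pderiv j (pderiv i r) := by
  classical
  have h : ⁅pderiv i, pderiv j⁆ = (0 : Derivation R (MvPolynomial σ R) (MvPolynomial σ R)) :=
    derivation_ext fun k => by
      rw [Derivation.commutator_apply]
      simp [pderiv_X, Pi.single_apply, apply_ite (pderiv _)]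
  rw [← sub_eq_zero, ← Derivation.commutator_apply, h, Derivation.zero_apply]

variable [Fintype σ]

noncomputable def laplacian (r : MvPolynomial σ R) : MvPolynomial σ R :=
  ∑ i, pderiv i (pderiv i r)

theorem pderiv_laplacian (j : σ) (r : MvPolynomial σ R) :
    pderiv j (laplacian r) = laplacian (pderiv j r) := by
  simp only [laplacian, map_sum, pderiv_comm j]

theorem pderiv_sum_X_mul_pderiv (j : σ) (r : MvPolynomial σ R) :
    pderiv j (∑ i, X i * pderiv i r) = ∑ i, X i * pderiv i (pderiv j r) + pderiv j r := by
  classical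
  simp [pderiv_X, Pi.single_apply, Finset.sum_add_distrib, pderiv_comm j]

theorem sum_X_mul_pderiv_pderiv_eq {r : MvPolynomial σ R} {c : R}
    (heuler : ∑ i, X i * pderiv i r = c • r) (j : σ) :
    ∑ i, X i * pderiv i (pderiv j r) = (c - 1) • pderiv j r := by
  have h := pderiv_sum_X_mul_pderiv j r
  rw [heuler, Derivation.map_smul] at h
  rw [sub_smul, one_smul, h, add_sub_cancel_right]

end Algebra

variable {σ E : Type*} [Fintype σ] [NormedAddCommGroup E] [NormedSpace ℝ E]

theorem hasFDerivAt_eval_comp (ℓ : σ → E →L[ℝ] ℝ) (r : MvPolynomial σ ℝ) (x : E) :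
    HasFDerivAt (fun y => eval (fun i => ℓ i y) r)
      (∑ i, eval (fun j => ℓ j x) (pderiv i r) • ℓ i) x := by
  classical
  induction r using MvPolynomial.induction_on with
  | C a => simpa using hasFDerivAt_const a x
  | add r s hr hs =>
    simp only [map_add, add_smul, Finset.sum_add_distrib]
    exact hr.add hs
  | mul_X r n hr =>
    simp only [map_mul, eval_X]
    refine (hr.mul (ℓ n).hasFDerivAt).congr_fderiv ?_
    ext v
    simp [pderiv_X, Pi.single_apply, apply_ite (eval _), add_mul, Finset.sum_add_distrib,
      Finset.mul_sum, mul_assoc]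

theorem hasFDerivAt_eval (r : MvPolynomial σ ℝ) (x : σ → ℝ) :
    HasFDerivAt (fun y => eval y r)
      (∑ i, eval x (pderiv i r) •
        ContinuousLinearMap.proj (R := ℝ) (φ := fun _ : σ => ℝ) i) x := by
  have h := hasFDerivAt_eval_comp
    (fun j => ContinuousLinearMap.proj (R := ℝ) (φ := fun _ : σ => ℝ) j) r x
  simp only [ContinuousLinearMap.proj_apply] at h
  exact h

theorem fderiv_eval_apply_single [DecidableEq σ] (r : MvPolynomial σ ℝ) (x : σ → ℝ)
    (i : σ) :
    fderiv ℝ (fun y => eval y r) x (Pi.single i 1) = eval x (pderiv i r) := by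
  simp [(hasFDerivAt_eval r x).fderiv, Pi.single_apply]

theorem sum_X_mul_pderiv_eq_of_eval_smul {r : MvPolynomial σ ℝ} {d : ℕ}
    (h : ∀ (t : ℝ) (x : σ → ℝ), eval (t • x) r = t ^ d * eval x r) :
    ∑ i, X i * pderiv i r = (d : ℝ) • r := by
  refine MvPolynomial.funext fun x => ?_
  have hchain :
      HasDerivAt (fun t : ℝ => eval (t • x) r) (∑ i, eval x (pderiv i r) * x i) 1 := by
    have := (hasFDerivAt_eval r ((1 : ℝ) • x)).comp_hasDerivAt (1 : ℝ)
      ((hasDerivAt_id (1 : ℝ)).smul_const x)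
    simp only [id_eq, one_smul, sum_apply, smul_apply,
      ContinuousLinearMap.proj_apply, smul_eq_mul] at this
    exact this
  have hpow : HasDerivAt (fun t : ℝ => eval (t • x) r) (d * eval x r) 1 := by
    simp only [h]
    simpa using (hasDerivAt_pow d (1 : ℝ)).mul_const (eval x r)
  simpa [smul_eval, mul_comm] using hchain.unique hpow

theorem eval_eq_sum_of_eval_smul {r : MvPolynomial σ ℝ}
    (h : ∀ (t : ℝ) (x : σ → ℝ), eval (t • x) r = t * eval x r) (x : σ → ℝ) :
    eval x r = ∑ i, eval 0 (pderiv i r) * x i := by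
  have hr := hasFDerivAt_eval r 0
  rw [apply_eq_fderiv_zero_apply hr.differentiableAt h x, hr.fderiv]
  simp [mul_comm]

theorem eval_eq_of_pderiv_eq_zero [DecidableEq σ] {r : MvPolynomial σ ℝ} {i : σ}
    (hr : pderiv i r = 0) {x y : σ → ℝ} (hxy : ∀ j ≠ i, x j = y j) :
    eval x r = eval y r := by
  have hy : y = x + (y i - x i) • Pi.single i 1 := by
    ext j
    by_cases hj : j = i
    · simp [hj]
    · simp [hj, hxy j hj]
  rw [hy, apply_add_smul_eq_of_fderiv_apply_eq_zero
    (fun z => (hasFDerivAt_eval r z).differentiableAt)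
    fun z => by rw [fderiv_eval_apply_single, hr, map_zero]]

end MvPolynomial

section GaussianWeight

variable {σ : Type*} [Fintype σ]

noncomputable def gaussianWeight (x : σ → ℝ) : ℝ := Real.exp (-(1 / 2) * ∑ i, x i ^ 2)

theorem gaussianWeight_pos (x : σ → ℝ) : 0 < gaussianWeight x := Real.exp_pos _

theorem hasFDerivAt_gaussianWeight (x : σ → ℝ) :
    HasFDerivAt gaussianWeight
      (-gaussianWeight x •
        ∑ i, x i • ContinuousLinearMap.proj (R := ℝ) (φ := fun _ : σ => ℝ) i) x := by
  have hsq : HasFDerivAt (fun y : σ → ℝ => ∑ i, y i ^ 2)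
      (∑ i, (2 * x i) • ContinuousLinearMap.proj (R := ℝ) (φ := fun _ => ℝ) i) x :=
    HasFDerivAt.fun_sum fun i _ => by simpa using (hasFDerivAt_apply (𝕜 := ℝ) i x).pow 2
  refine (hsq.const_mul (-(1 / 2))).exp.congr_fderiv ?_
  ext v
  simp only [gaussianWeight, smul_apply, sum_apply,
    ContinuousLinearMap.proj_apply, smul_eq_mul, Finset.mul_sum]
  exact Finset.sum_congr rfl fun i _ => by ring

theorem fderiv_gaussianWeight_apply_single [DecidableEq σ] (x : σ → ℝ) (i : σ) :
    fderiv ℝ gaussianWeight x (Pi.single i 1) = -(x i * gaussianWeight x) := by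
  simp [(hasFDerivAt_gaussianWeight x).fderiv, Pi.single_apply, mul_comm]

theorem integrable_pow_mul_exp_neg_half_mul_sq (n : ℕ) :
    Integrable fun t : ℝ => t ^ n * Real.exp (-(1 / 2) * t ^ 2) := by
  simpa [Real.rpow_natCast] using
    integrable_rpow_mul_exp_neg_mul_sq (b := 1 / 2) (by norm_num) (s := n)
      (by linarith [n.cast_nonneg (α := ℝ)])

end GaussianWeight

namespace MvPolynomial

variable {σ : Type*} [Fintype σ]

theorem integrable_eval_mul_gaussianWeight (r : MvPolynomial σ ℝ) :
    Integrable fun x => eval x r * gaussianWeight x := by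
  induction r using MvPolynomial.induction_on' with
  | monomial a c =>
    have hprod := Integrable.fintype_prod (f := fun i t => t ^ a i * Real.exp (-(1 / 2) * t ^ 2))
      fun i => integrable_pow_mul_exp_neg_half_mul_sq (a i)
    refine (hprod.const_mul c).congr (ae_of_all _ fun x => ?_)
    simp only [eval_monomial, Finsupp.prod_fintype _ _ (fun i => pow_zero (x i)), gaussianWeight,
      Finset.mul_sum, Real.exp_sum, Finset.prod_mul_distrib, mul_assoc]
  | add r s hr hs =>
    simp only [map_add, add_mul]
    exact hr.add hs

noncomputable def gaussianIntegral : MvPolynomial σ ℝ →ₗ[ℝ] ℝ where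
  toFun r := ∫ x, eval x r * gaussianWeight x
  map_add' r s := by
    simp only [map_add, add_mul]
    exact integral_add (integrable_eval_mul_gaussianWeight r) (integrable_eval_mul_gaussianWeight s)
  map_smul' c r := by simp [smul_eval, mul_assoc, integral_const_mul]

theorem gaussianIntegral_apply (r : MvPolynomial σ ℝ) :
    gaussianIntegral r = ∫ x, eval x r * gaussianWeight x := rfl

theorem gaussianIntegral_pderiv (r : MvPolynomial σ ℝ) (i : σ) :
    gaussianIntegral (pderiv i r) = gaussianIntegral (X i * r) := by
  classical
  have hr : Differentiable ℝ fun x : σ → ℝ => eval x r := fun x =>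
    (hasFDerivAt_eval r x).differentiableAt
  have hW : Differentiable ℝ (gaussianWeight (σ := σ)) := fun x =>
    (hasFDerivAt_gaussianWeight x).differentiableAt
  have hXr : ∀ x : σ → ℝ, eval x r * fderiv ℝ gaussianWeight x (Pi.single i 1) =
      -(eval x (X i * r) * gaussianWeight x) := fun x => by
    rw [fderiv_gaussianWeight_apply_single, map_mul, eval_X]
    ring
  have h := integral_mul_fderiv_eq_neg_fderiv_mul_of_integrable (v := Pi.single i 1)
    (by simpa only [fderiv_eval_apply_single] using integrable_eval_mul_gaussianWeight (pderiv i r))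
    (by simpa only [hXr] using (integrable_eval_mul_gaussianWeight (X i * r)).fun_neg)
    (integrable_eval_mul_gaussianWeight r) (fun x _ => hr x) (fun x _ => hW x)
  simpa only [gaussianIntegral_apply, hXr, fderiv_eval_apply_single, integral_neg, neg_inj] using
    h.symm

theorem eq_zero_of_nonneg_of_gaussianIntegral_eq_zero {r : MvPolynomial σ ℝ}
    (hnonneg : ∀ x, 0 ≤ eval x r) (hr : gaussianIntegral r = 0) : r = 0 := by
  have hcont : Continuous fun x => eval x r * gaussianWeight x :=
    (continuous_eval r).mul (Real.continuous_exp.comp (by fun_prop))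
  have hae := (integral_eq_zero_iff_of_nonneg
    (fun x => mul_nonneg (hnonneg x) (gaussianWeight_pos x).le)
    (integrable_eval_mul_gaussianWeight r)).mp hr
  have hzero := (hcont.ae_eq_iff_eq volume continuous_const).mp hae
  refine MvPolynomial.funext fun x => ?_
  have hx : eval x r * gaussianWeight x = 0 := congr_fun hzero x
  simpa using (mul_eq_zero.mp hx).resolve_right (gaussianWeight_pos x).ne'

theorem eq_zero_of_laplacian_eq_zero_of_nonneg {r : MvPolynomial σ ℝ} {c : ℝ} (hc : c ≠ 0)
    (heuler : ∑ i, X i * pderiv i r = c • r) (hlap : laplacian r = 0)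
    (hnonneg : ∀ x, 0 ≤ eval x r) : r = 0 := by
  refine eq_zero_of_nonneg_of_gaussianIntegral_eq_zero hnonneg ?_
  have h : c * gaussianIntegral r = 0 := calc
    c * gaussianIntegral r = gaussianIntegral (∑ i, X i * pderiv i r) := by
      rw [heuler, map_smul, smul_eq_mul]
    _ = gaussianIntegral (laplacian r) := by
      simp only [laplacian, map_sum, gaussianIntegral_pderiv]
    _ = 0 := by rw [hlap, map_zero]
  exact (mul_eq_zero.mp h).resolve_left hc

end MvPolynomial


namespace MvPolynomial

variable {ι : Type*} [Fintype ι]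

theorem hasFDerivAt_eval_euclidean (r : MvPolynomial ι ℝ) (x : EuclideanSpace ℝ ι) :
    HasFDerivAt (fun y : EuclideanSpace ℝ ι => eval (fun i => y i) r)
      (∑ i, eval (fun j => x j) (pderiv i r) • EuclideanSpace.proj (𝕜 := ℝ) i) x := by
  have h := hasFDerivAt_eval_comp (fun i => EuclideanSpace.proj (𝕜 := ℝ) (ι := ι) i) r x
  simp only [PiLp.proj_apply] at h
  exact h

theorem fderiv_eval_euclidean_apply_single [DecidableEq ι] (r : MvPolynomial ι ℝ)
    (x : EuclideanSpace ℝ ι) (i : ι) :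
    fderiv ℝ (fun y : EuclideanSpace ℝ ι => eval (fun j => y j) r) x
      (EuclideanSpace.single i 1) = eval (fun j => x j) (pderiv i r) := by
  simp [(hasFDerivAt_eval_euclidean r x).fderiv, PiLp.single_apply]

theorem lapl_eval {N : ℕ} (r : MvPolynomial (Fin N) ℝ) (x : EuclideanSpace ℝ (Fin N)) :
    lapl (fun y => eval (fun j => y j) r) x = eval (fun j => x j) (laplacian r) := by
  simp [lapl, laplacian, fderiv_eval_euclidean_apply_single]

end MvPolynomial

/-- **Corollary 3.2.** Let `N ≥ 3` and let `H` be a homogeneous harmonic polynomial of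
degree `d ≥ 1` on `ℝᴺ` with `∂H/∂x_N ≥ 0` everywhere. Then either `H` is a linear
function (and `d = 1`), or `d ≥ 2` and `H` depends only on the first `N - 1` variables. -/
theorem homogeneous_harmonic_monotone_alternative
    (N : ℕ) (hN : 3 ≤ N) (d : ℕ) (hd : 1 ≤ d)
    (H : EuclideanSpace ℝ (Fin N) → ℝ)
    (p : MvPolynomial (Fin N) ℝ)
    (hp : ∀ x, H x = MvPolynomial.eval (fun i => x i) p)
    (hhom : ∀ (t : ℝ) (x : EuclideanSpace ℝ (Fin N)), H (t • x) = t ^ d * H x)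
    (hharm : ∀ x, lapl H x = 0)
    (hmon : ∀ x, 0 ≤ fderiv ℝ H x (EuclideanSpace.single (⟨N - 1, by omega⟩ : Fin N) 1)) :
    (d = 1 ∧ ∃ c : Fin N → ℝ, ∀ x, H x = ∑ i, c i * x i) ∨
    (2 ≤ d ∧ ∀ x y : EuclideanSpace ℝ (Fin N),
      (∀ i : Fin N, (i : ℕ) < N - 1 → x i = y i) → H x = H y) := by
  obtain rfl : H = fun x => eval (fun i => x i) p := funext hp
  set n : Fin N := ⟨N - 1, by omega⟩
  have hhom' (t : ℝ) (v : Fin N → ℝ) : eval (t • v) p = t ^ d * eval v p := by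
    simpa [Pi.smul_def] using hhom t (WithLp.toLp 2 v)
  have hlap : laplacian p = 0 := MvPolynomial.funext fun v => by
    simpa [lapl_eval] using hharm (WithLp.toLp 2 v)
  have hnonneg (v : Fin N → ℝ) : 0 ≤ eval v (pderiv n p) := by
    simpa [fderiv_eval_euclidean_apply_single] using hmon (WithLp.toLp 2 v)
  rcases Nat.lt_or_ge d 2 with hd1 | hd2
  · obtain rfl : d = 1 := by omega
    exact .inl ⟨rfl, fun i => eval 0 (pderiv i p),
      fun x => eval_eq_sum_of_eval_smul (fun t v => by simpa using hhom' t v) _⟩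
  · have hc : (d : ℝ) - 1 ≠ 0 := sub_ne_zero.mpr (by exact_mod_cast (by omega : d ≠ 1))
    have hq : pderiv n p = 0 := eq_zero_of_laplacian_eq_zero_of_nonneg hc
      (sum_X_mul_pderiv_pderiv_eq (sum_X_mul_pderiv_eq_of_eval_smul hhom') n)
      (by rw [← pderiv_laplacian, hlap, map_zero]) hnonneg
    refine .inr ⟨hd2, fun x y hxy => eval_eq_of_pderiv_eq_zero hq fun j hj => hxy j ?_⟩
    have : (j : ℕ) ≠ N - 1 := fun h => hj (Fin.ext h)
    omega
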